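/- arXiv:math/0609311 — 2 statements merged into one kernel-verified Lean document; each statement's English description precedes it below -/
import Mathlib

section
/- In the setting of a pseudo-para-cyclic B-comodule X_• over a left exact comonad B on a complete category, with X_n^B ⊂ X_n defined as the joint equalizer (limit of equalizers) of the pairs (ρ_n ∘ τ_n^m, B(τ_n^m) ∘ ρ_n) for all m ∈ ℕ, the face maps restrict: for each 0 ≤ j ≤ n there is a unique morphism ∂_j^B : X_{n+1}^B → X_n^B with η_n ∘ ∂_j^B = ∂_j ∘ η_{n+1}. Concretely, the key computation is: ρ_n ∘ τ_n^i ∘ ∂_j ∘ η_{n+1} = B(τ_n^i) ∘ ρ_n ∘ ∂_j ∘ η_{n+1} for all i ∈ ℕ, using the para-cyclic relation τ_n^i ∂_j = ∂_q τ_{n+1}^{i+p} where i + j = (n+1)p + q, 0 ≤ q ≤ n. -/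
open CategoryTheory Simplicial

/-!
Moving a power of `τ` past a face map only changes the face index and the exponent:
`∂_j τ^i = τ^p ∂_q` for suitable `p, q`. Since every face map is a comodule morphism,
`∂_j ∘ η_{n+1}` then inherits the equalizing property for `τ_n^i` from the one of `η_{n+1}`
for `τ_{n+1}^p`, and the universal property of `η_n` produces `∂_j^B`.
-/

/-- A para-cyclic object in a category `C`. -/
structure Paracyclic (C : Type*) [Category C] where
  X : SimplicialObject C
  τ : ∀ n : ℕ, X _⦋n⦌ ⟶ X _⦋n⦌
  δτ_succ : ∀ (n : ℕ) (i : Fin (n + 1)),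
    τ (n + 1) ≫ X.δ i.succ = X.δ i.castSucc ≫ τ n
  δτ_zero : ∀ n : ℕ, τ (n + 1) ≫ X.δ 0 = X.δ (Fin.last (n + 1))
  στ_succ : ∀ (n : ℕ) (i : Fin n),
    τ n ≫ X.σ i.succ = X.σ i.castSucc ≫ τ (n + 1)
  στ_zero : ∀ n : ℕ, τ n ≫ X.σ 0 = X.σ (Fin.last n) ≫ τ (n + 1) ≫ τ (n + 1)

/-- `τ_n^k`. -/
def Paracyclic.τpow {C : Type*} [Category C] (P : Paracyclic C) (n : ℕ) :
    ℕ → (P.X _⦋n⦌ ⟶ P.X _⦋n⦌) := fun k => match k with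
  | 0 => 𝟙 _
  | k + 1 => P.τ n ≫ P.τpow n k

namespace Paracyclic

variable {C : Type*} [Category C] (P : Paracyclic C)

lemma τpow_add (n a b : ℕ) : P.τpow n (a + b) = P.τpow n a ≫ P.τpow n b := by
  induction a with
  | zero => simp [τpow]
  | succ a ih =>
    rw [Nat.add_right_comm]
    simp only [τpow, ih, Category.assoc]

lemma τpow_one (n : ℕ) : P.τpow n 1 = P.τ n := by
  simp [τpow]

lemma exists_δ_comp_τ (n : ℕ) (j : Fin (n + 2)) :
    ∃ p, ∃ q : Fin (n + 2), P.X.δ j ≫ P.τ n = P.τpow (n + 1) p ≫ P.X.δ q := by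
  induction j using Fin.lastCases with
  | last =>
    -- `∂_{n+1} τ = τ ∂_0 τ = τ² ∂_1`
    refine ⟨2, (0 : Fin (n + 1)).succ, ?_⟩
    rw [← P.δτ_zero, Category.assoc, ← Fin.castSucc_zero, ← P.δτ_succ]
    simp [τpow]
  | cast i => exact ⟨1, i.succ, by rw [τpow_one, P.δτ_succ]⟩

lemma exists_δ_comp_τpow (n i : ℕ) (j : Fin (n + 2)) :
    ∃ p, ∃ q : Fin (n + 2), P.X.δ j ≫ P.τpow n i = P.τpow (n + 1) p ≫ P.X.δ q := by
  induction i generalizing j with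
  | zero => exact ⟨0, j, by simp [τpow]⟩
  | succ i ih =>
    obtain ⟨p, q, h⟩ := P.exists_δ_comp_τ n j
    obtain ⟨p', q', h'⟩ := ih q
    refine ⟨p + p', q', ?_⟩
    rw [τpow, reassoc_of% h, h', τpow_add, Category.assoc]

end Paracyclic

lemma comp_coaction_eq_of_comp_eq {C : Type*} [Category C] (F : C ⥤ C)
    {X Y Z : C} (ρX : X ⟶ F.obj X) (ρY : Y ⟶ F.obj Y) (f : Z ⟶ X) (φ ψ : X ⟶ Y)
    (s : X ⟶ X) (t : Y ⟶ Y) (hφ : φ ≫ ρY = ρX ≫ F.map φ) (hψ : ψ ≫ ρY = ρX ≫ F.map ψ)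
    (hst : φ ≫ t = s ≫ ψ) (hf : f ≫ s ≫ ρX = f ≫ ρX ≫ F.map s) :
    f ≫ φ ≫ t ≫ ρY = f ≫ φ ≫ ρY ≫ F.map t :=
  calc f ≫ φ ≫ t ≫ ρY = (f ≫ s ≫ ρX) ≫ F.map ψ := by
        rw [reassoc_of% hst, hψ]; simp only [Category.assoc]
    _ = f ≫ ρX ≫ F.map (φ ≫ t) := by rw [hf, hst, F.map_comp]; simp only [Category.assoc]
    _ = f ≫ φ ≫ ρY ≫ F.map t := by rw [F.map_comp, reassoc_of% hφ]

/-- in the setting of a pseudo-para-cyclic `B`-comodule over a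
left exact comonad on a complete category, with `η_n : X_n^B ⟶ X_n` the joint
equalizer of the pairs `(ρ_n ∘ τ_n^m, B(τ_n^m) ∘ ρ_n)`, the face maps
restrict: for `0 ≤ j ≤ n` there is a unique `∂_j^B : X_{n+1}^B ⟶ X_n^B` with
`η_n ∘ ∂_j^B = ∂_j ∘ η_{n+1}`; the key computation is
`ρ_n ∘ τ_n^i ∘ ∂_j ∘ η_{n+1} = B(τ_n^i) ∘ ρ_n ∘ ∂_j ∘ η_{n+1}` for all `i`. -/
theorem face_maps_restrict {C : Type*} [Category C]
    (B : Comonad C)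
    (P : Paracyclic C)
    (ρ : ∀ n : ℕ, P.X _⦋n⦌ ⟶ B.obj (P.X _⦋n⦌))
    (hδ : ∀ (n : ℕ) (i : Fin (n + 2)),
      P.X.δ i ≫ ρ n = ρ (n + 1) ≫ B.map (P.X.δ i))
    (L : ℕ → C) (η : ∀ n : ℕ, L n ⟶ P.X _⦋n⦌)
    (hLeq : ∀ n m : ℕ,
      η n ≫ P.τpow n m ≫ ρ n = η n ≫ ρ n ≫ B.map (P.τpow n m))
    (hLuniv : ∀ (n : ℕ) (Z : C) (f : Z ⟶ P.X _⦋n⦌),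
      (∀ m : ℕ, f ≫ P.τpow n m ≫ ρ n = f ≫ ρ n ≫ B.map (P.τpow n m)) →
      ∃! g : Z ⟶ L n, g ≫ η n = f) :
    ∀ (n j : ℕ) (hj : j ≤ n),
      (∀ i : ℕ,
        η (n + 1) ≫ P.X.δ ⟨j, by omega⟩ ≫ P.τpow n i ≫ ρ n =
          η (n + 1) ≫ P.X.δ ⟨j, by omega⟩ ≫ ρ n ≫ B.map (P.τpow n i)) ∧
      ∃! dB : L (n + 1) ⟶ L n,
        dB ≫ η n = η (n + 1) ≫ P.X.δ ⟨j, by omega⟩ := by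
  intro n j hj
  have equalizes : ∀ i : ℕ,
      η (n + 1) ≫ P.X.δ ⟨j, by omega⟩ ≫ P.τpow n i ≫ ρ n =
        η (n + 1) ≫ P.X.δ ⟨j, by omega⟩ ≫ ρ n ≫ B.map (P.τpow n i) := fun i => by
    obtain ⟨p, q, h⟩ := P.exists_δ_comp_τpow n i ⟨j, by omega⟩
    exact comp_coaction_eq_of_comp_eq B.toFunctor _ _ _ _ _ _ _ (hδ n _) (hδ n q) h
      (hLeq (n + 1) p)
  exact ⟨equalizes, hLuniv n _ _ fun m => by simpa only [Category.assoc] using equalizes m⟩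
end

section
/- In the setting of a pseudo-para-cyclic B-comodule X_• over a left exact comonad B on a complete category, with η_n : X_n^B → X_n as above, the coaction restricts: ρ_n ∘ η_n factors through B(η_n) : B(X_n^B) → B(X_n), yielding a B-comodule structure on X_n^B. The key computation is B²(τ_n^j) ∘ B(ρ_n) ∘ ρ_n ∘ η_n = B(ρ_n) ∘ B(τ_n^j) ∘ ρ_n ∘ η_n for all j ∈ ℕ, using coassociativity B(ρ_n) ∘ ρ_n = Δ_{X_n} ∘ ρ_n, naturality of Δ, and the defining equalizer property of η_n; left exactness of B identifies the limit of the equalizers of (B²(τ_n^j) ∘ B(ρ_n), B(ρ_n) ∘ B(τ_n^j)) with B(X_n^B). -/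
/-!
Coassociativity `ρ ≫ δ = ρ ≫ B(ρ)` and naturality of `δ` show that `ηₙ ≫ ρₙ` equalizes the
`B`-images `B(τₙᵐ ≫ ρₙ)` and `B(ρₙ ≫ B(τₙᵐ))` of the pairs cutting out `Xₙᴮ`. Since `B` is left
exact, `B(ηₙ)` is the joint equalizer of those images, so `ηₙ ≫ ρₙ` factors uniquely through it.
-/

open CategoryTheory Simplicial

namespace CategoryTheory

namespace Limits

universe w

variable {C D : Type*} [Category C] [Category D]

def MulticospanShape.parallelFamily (ι : Type w) : MulticospanShape.{0, w} where
  L := PUnit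
  R := ι
  fst _ := PUnit.unit
  snd _ := PUnit.unit

variable {ι : Type w} {X : C} {Y : ι → C}

def MulticospanIndex.ofParallelFamily (f g : ∀ i, X ⟶ Y i) :
    MulticospanIndex (.parallelFamily ι) C where
  left _ := X
  right := Y
  fst := f
  snd := g

structure IsJointEqualizer (f g : ∀ i, X ⟶ Y i) {L : C} (η : L ⟶ X) : Prop where
  condition : ∀ i, η ≫ f i = η ≫ g i
  existsUnique_lift :
    ∀ {Z : C} (h : Z ⟶ X), (∀ i, h ≫ f i = h ≫ g i) → ∃! k : Z ⟶ L, k ≫ η = h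

namespace IsJointEqualizer

variable {f g : ∀ i, X ⟶ Y i} {L : C} {η : L ⟶ X}

noncomputable def isLimit (hη : IsJointEqualizer f g η) :
    IsLimit (Multifork.ofι (.ofParallelFamily f g) L (fun _ => η) hη.condition) :=
  Multifork.IsLimit.mk _
    (fun E => (hη.existsUnique_lift (E.ι ⟨⟩) E.condition).choose)
    (fun E _ => (hη.existsUnique_lift (E.ι ⟨⟩) E.condition).choose_spec.1)
    (fun E m hm => (hη.existsUnique_lift (E.ι ⟨⟩) E.condition).choose_spec.2 m (hm ⟨⟩))

theorem map (hη : IsJointEqualizer f g η) (F : C ⥤ D)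
    [PreservesLimitsOfShape (WalkingMulticospan (.parallelFamily ι)) F] :
    IsJointEqualizer (fun i => F.map (f i)) (fun i => F.map (g i)) (F.map η) := by
  have hF := Multifork.isLimitMapOfPreserves _ F hη.isLimit
  refine ⟨fun i => by simp only [← F.map_comp, hη.condition i], fun h hh => ?_⟩
  have hfac := Multifork.IsLimit.fac hF (fun _ => h) hh ⟨⟩
  refine ⟨_, hfac, fun k hk => Multifork.IsLimit.hom_ext hF fun _ => ?_⟩
  exact hk.trans hfac.symm

end IsJointEqualizer

end Limits

theorem Comonad.map_coaction_comp_map_map_eq {C : Type*} [Category C] {B : Comonad C}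
    {X Y Z : C} {ρX : X ⟶ B.obj X} {ρY : Y ⟶ B.obj Y}
    (hX : ρX ≫ B.δ.app X = ρX ≫ B.map ρX) (hY : ρY ≫ B.δ.app Y = ρY ≫ B.map ρY)
    {t : X ⟶ Y} {e : Z ⟶ X} (he : e ≫ t ≫ ρY = e ≫ ρX ≫ B.map t) :
    e ≫ ρX ≫ B.map ρX ≫ B.map (B.map t) = e ≫ ρX ≫ B.map t ≫ B.map ρY :=
  calc e ≫ ρX ≫ B.map ρX ≫ B.map (B.map t)
      = e ≫ ρX ≫ B.δ.app X ≫ B.map (B.map t) := by rw [reassoc_of% hX]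
    _ = (e ≫ ρX ≫ B.map t) ≫ B.δ.app Y := by simp
    _ = e ≫ t ≫ ρY ≫ B.map ρY := by rw [← he]; simp [hY]
    _ = e ≫ ρX ≫ B.map t ≫ B.map ρY := by rw [reassoc_of% he]

end CategoryTheory

theorem coaction_restricts_general {C : Type*} [Category C]
    (B : Comonad C)
    [Limits.PreservesLimits B.toFunctor]
    (P : Paracyclic C)
    (ρ : ∀ n : ℕ, P.X _⦋n⦌ ⟶ B.obj (P.X _⦋n⦌))
    (hcoassoc : ∀ n, ρ n ≫ B.δ.app _ = ρ n ≫ B.map (ρ n))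
    (L : ℕ → C) (η : ∀ n : ℕ, L n ⟶ P.X _⦋n⦌)
    (hLeq : ∀ n m : ℕ,
      η n ≫ P.τpow n m ≫ ρ n = η n ≫ ρ n ≫ B.map (P.τpow n m))
    (hLuniv : ∀ (n : ℕ) (Z : C) (f : Z ⟶ P.X _⦋n⦌),
      (∀ m : ℕ, f ≫ P.τpow n m ≫ ρ n = f ≫ ρ n ≫ B.map (P.τpow n m)) →
      ∃! g : Z ⟶ L n, g ≫ η n = f) :
    ∀ n : ℕ,
      (∀ j : ℕ,
        η n ≫ ρ n ≫ B.map (ρ n) ≫ B.map (B.map (P.τpow n j)) =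
          η n ≫ ρ n ≫ B.map (P.τpow n j) ≫ B.map (ρ n)) ∧
      ∃! r : L n ⟶ B.obj (L n), r ≫ B.map (η n) = η n ≫ ρ n := by
  intro n
  have key (j : ℕ) := Comonad.map_coaction_comp_map_map_eq (hcoassoc n) (hcoassoc n) (hLeq n j)
  have hη : Limits.IsJointEqualizer (fun m => P.τpow n m ≫ ρ n) (fun m => ρ n ≫ B.map (P.τpow n m))
      (η n) := ⟨hLeq n, hLuniv n _⟩
  have := Limits.preservesSmallestLimits_of_preservesLimits B.toFunctor
  refine ⟨key, (hη.map B.toFunctor).existsUnique_lift _ fun j => ?_⟩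
  simpa only [Functor.map_comp, Category.assoc] using (key j).symm

/-- in the setting of a pseudo-para-cyclic `B`-comodule over a
left exact comonad on a complete category, with `η_n : X_n^B ⟶ X_n` the joint
equalizer of the pairs `(ρ_n ∘ τ_n^m, B(τ_n^m) ∘ ρ_n)`, the coaction
restricts: `ρ_n ∘ η_n` factors (uniquely) through `B(η_n)`, yielding a
`B`-comodule structure on `X_n^B`.  The key computation is
`B²(τ_n^j) ∘ B(ρ_n) ∘ ρ_n ∘ η_n = B(ρ_n) ∘ B(τ_n^j) ∘ ρ_n ∘ η_n`. -/
theorem coaction_restricts {C : Type*} [Category C]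
    [Limits.HasLimits C] (B : Comonad C)
    [Limits.PreservesLimits B.toFunctor]
    (P : Paracyclic C)
    (ρ : ∀ n : ℕ, P.X _⦋n⦌ ⟶ B.obj (P.X _⦋n⦌))
    (hcounit : ∀ n, ρ n ≫ B.ε.app _ = 𝟙 _)
    (hcoassoc : ∀ n, ρ n ≫ B.δ.app _ = ρ n ≫ B.map (ρ n))
    (hδ : ∀ (n : ℕ) (i : Fin (n + 2)),
      P.X.δ i ≫ ρ n = ρ (n + 1) ≫ B.map (P.X.δ i))
    (hσ : ∀ (n : ℕ) (i : Fin (n + 1)),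
      P.X.σ i ≫ ρ (n + 1) = ρ n ≫ B.map (P.X.σ i))
    (L : ℕ → C) (η : ∀ n : ℕ, L n ⟶ P.X _⦋n⦌)
    (hLeq : ∀ n m : ℕ,
      η n ≫ P.τpow n m ≫ ρ n = η n ≫ ρ n ≫ B.map (P.τpow n m))
    (hLuniv : ∀ (n : ℕ) (Z : C) (f : Z ⟶ P.X _⦋n⦌),
      (∀ m : ℕ, f ≫ P.τpow n m ≫ ρ n = f ≫ ρ n ≫ B.map (P.τpow n m)) →
      ∃! g : Z ⟶ L n, g ≫ η n = f) :
    ∀ n : ℕ,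
      (∀ j : ℕ,
        η n ≫ ρ n ≫ B.map (ρ n) ≫ B.map (B.map (P.τpow n j)) =
          η n ≫ ρ n ≫ B.map (P.τpow n j) ≫ B.map (ρ n)) ∧
      ∃! r : L n ⟶ B.obj (L n), r ≫ B.map (η n) = η n ≫ ρ n :=
  coaction_restricts_general B P ρ hcoassoc L η hLeq hLuniv
end
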